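/- Let R be a TRS over a signature containing AC symbols and let R^e be R together with all extended rules f(f(u,v),x) → f(r,x) for rules f(u,v) → r with f an AC symbol and x a fresh variable. Then ←AC · →R^e,AC ⊆ →R^e,AC · (←AC)^=, where →R^e,AC is Peterson–Stickel rewriting: s →R,AC t if s|p ∼AC ℓσ and t = s[rσ]p for some rule ℓ→r. -/

import Mathlib

/-- First-order terms over a signature `F` with natural-number variables. -/
inductive Tm (F : Type) : Type
  | var : Nat → Tm F
  | fn  : F → List (Tm F) → Tm F

namespace Tm

variable {F : Type}

mutual
def subst (σ : Nat → Tm F) : Tm F → Tm F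
  | .var n => σ n
  | .fn f ts => .fn f (substList σ ts)
def substList (σ : Nat → Tm F) : List (Tm F) → List (Tm F)
  | [] => []
  | t :: ts => subst σ t :: substList σ ts
end

mutual
def varsList : Tm F → List Nat
  | .var n => [n]
  | .fn _ ts => varsListL ts
def varsListL : List (Tm F) → List Nat
  | [] => []
  | t :: ts => varsList t ++ varsListL ts
end

/-- The set of variables of a term. -/
def vars (t : Tm F) : Set Nat := {n | n ∈ varsList t}

/-- A term is linear if no variable occurs more than once. -/
def Linear (t : Tm F) : Prop := (varsList t).Nodup

/-- The subterm at a given position (if the position exists). -/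
def subtermAt : Tm F → List Nat → Option (Tm F)
  | t, [] => some t
  | .var _, _ :: _ => none
  | .fn _ ts, i :: p =>
    match ts[i]? with
    | some u => subtermAt u p
    | none => none
  termination_by t p => p.length

/-- Replacement of the subterm at a given position. -/
def replaceAt : Tm F → List Nat → Tm F → Option (Tm F)
  | _, [], s => some s
  | .var _, _ :: _, _ => none
  | .fn f ts, i :: p, s =>
    match ts[i]? with
    | some u => (replaceAt u p s).map fun u' => .fn f (ts.set i u')
    | none => none
  termination_by t p _ => p.length

end Tm

open Tm

/-- A term rewrite system (or equational system): a set of pairs of terms. -/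
abbrev TRS (F : Type) := Set (Tm F × Tm F)

/-- Well-formedness of the rules: left-hand sides are not variables and
variables of right-hand sides occur on the left. -/
def IsTRS {F : Type} (R : TRS F) : Prop :=
  ∀ p ∈ R, (∀ n, p.1 ≠ .var n) ∧ vars p.2 ⊆ vars p.1

def LeftLinear {F : Type} (R : TRS F) : Prop := ∀ p ∈ R, Linear p.1

/-- One-step rewrite relation of a set of rules (closed under contexts and
substitutions). -/
def Rew {F : Type} (R : TRS F) (s t : Tm F) : Prop :=
  ∃ p l r σ, (l, r) ∈ R ∧ subtermAt s p = some (subst σ l) ∧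
    replaceAt s p (subst σ r) = some t

/-- Normal forms. -/
def NF {A : Type} (r : A → A → Prop) (a : A) : Prop := ∀ b, ¬ r a b

/-- The equational theory `∼B` generated by an ES `B`. -/
def simE {F : Type} (B : TRS F) : Tm F → Tm F → Prop :=
  Relation.EqvGen (Rew B)

/-- Rewriting modulo: `∼B · →R · ∼B`. -/
def RewMod {F : Type} (R B : TRS F) (s t : Tm F) : Prop :=
  ∃ s' t', simE B s s' ∧ Rew R s' t' ∧ simE B t' t

def Terminating {F : Type} (R : TRS F) : Prop :=
  WellFounded (fun a b => Rew R b a)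

def TerminatingMod {F : Type} (R B : TRS F) : Prop :=
  WellFounded (fun a b => RewMod R B b a)

/-- Conversion modulo `B`: arbitrary sequences of `→R`, `←R` and `∼B` steps. -/
def ConvMod {F : Type} (R B : TRS F) : Tm F → Tm F → Prop :=
  Relation.ReflTransGen (fun a b => Rew R a b ∨ Rew R b a ∨ simE B a b)

/-- Joinability modulo `B` using the plain rewrite relation:
`→R* · ∼B · ←R*`. -/
def JoinMod {F : Type} (R B : TRS F) (s t : Tm F) : Prop :=
  ∃ u v, Relation.ReflTransGen (Rew R) s u ∧ simE B u v ∧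
    Relation.ReflTransGen (Rew R) t v

def ChurchRosserMod {F : Type} (R B : TRS F) : Prop :=
  ∀ s t, ConvMod R B s t → JoinMod R B s t

def Joinable {F : Type} (R : TRS F) (s t : Tm F) : Prop :=
  ∃ v, Relation.ReflTransGen (Rew R) s v ∧ Relation.ReflTransGen (Rew R) t v

def Confluent {F : Type} (R : TRS F) : Prop :=
  ∀ s t u, Relation.ReflTransGen (Rew R) s t → Relation.ReflTransGen (Rew R) s u →
    Joinable R t u

/-- Renaming a term by a bijection on variables. -/
def rename {F : Type} (ρ : Nat ≃ Nat) (t : Tm F) : Tm F :=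
  subst (fun n => .var (ρ n)) t

def VariantTm {F : Type} (s t : Tm F) : Prop := ∃ ρ : Nat ≃ Nat, rename ρ s = t

def VariantRule {F : Type} (p q : Tm F × Tm F) : Prop :=
  ∃ ρ : Nat ≃ Nat, rename ρ p.1 = q.1 ∧ rename ρ p.2 = q.2

def Unifies {F : Type} (σ : Nat → Tm F) (s t : Tm F) : Prop := subst σ s = subst σ t

/-- Most general unifier. -/
def IsMGU {F : Type} (σ : Nat → Tm F) (s t : Tm F) : Prop :=
  Unifies σ s t ∧ ∀ τ, Unifies τ s t → ∃ δ, ∀ n, τ n = subst δ (σ n)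

/-- `CriticalPeak R₁ R₂ t p s u` : `t ←R₁[p] s →R₂[ε] u` is a critical peak
obtained from an overlap of variable-disjoint variants of rules of `R₁`
(inner rule) and `R₂` (root rule). -/
def CriticalPeak {F : Type} (R₁ R₂ : TRS F) (t : Tm F) (p : List Nat) (s u : Tm F) :
    Prop :=
  ∃ l₁ r₁ l₂ r₂ σ,
    (∃ q ∈ R₁, VariantRule q (l₁, r₁)) ∧
    (∃ q ∈ R₂, VariantRule q (l₂, r₂)) ∧
    (vars l₁ ∪ vars r₁) ∩ (vars l₂ ∪ vars r₂) = ∅ ∧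
    (∃ f ts, subtermAt l₂ p = some (.fn f ts) ∧ IsMGU σ l₁ (.fn f ts)) ∧
    (p = [] → ¬ VariantRule (l₁, r₁) (l₂, r₂)) ∧
    s = subst σ l₂ ∧
    replaceAt s p (subst σ r₁) = some t ∧
    u = subst σ r₂

/-- The set of critical pairs between `R₁` and `R₂`. -/
def CP {F : Type} (R₁ R₂ : TRS F) : Set (Tm F × Tm F) :=
  {tu | ∃ p s, CriticalPeak R₁ R₂ tu.1 p s tu.2}

/-- A critical peak `t ←[p] s →[ε] u` is prime (w.r.t. `R`) if all proper
subterms of `s|p` are in normal form w.r.t. `→R`. -/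
def PrimeAt {F : Type} (R : TRS F) (s : Tm F) (p : List Nat) : Prop :=
  ∀ q v, q ≠ [] → subtermAt s (p ++ q) = some v → NF (Rew R) v

/-- Prime critical pairs of a TRS. -/
def PCP {F : Type} (R : TRS F) : Set (Tm F × Tm F) :=
  {tu | ∃ p s, CriticalPeak R R tu.1 p s tu.2 ∧ PrimeAt R s p}

/-- `E ∪ E⁻¹`. -/
def sympm {F : Type} (E : TRS F) : TRS F :=
  E ∪ {q | ∃ p ∈ E, q = (p.2, p.1)}

/-- Prime critical pairs between `R` and `B^±` (in both directions), where
primality is always checked with respect to `→R`. -/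
def PCPpm {F : Type} (R B : TRS F) : Set (Tm F × Tm F) :=
  {tu | ∃ p s, (CriticalPeak R (sympm B) tu.1 p s tu.2 ∨
                CriticalPeak (sympm B) R tu.1 p s tu.2) ∧ PrimeAt R s p}

/-- The associativity and commutativity axioms for the symbols in `Ac`,
oriented left-to-right. -/
def ACax {F : Type} (Ac : Set F) : TRS F :=
  {q | ∃ f ∈ Ac,
    q = (Tm.fn f [Tm.fn f [Tm.var 0, Tm.var 1], Tm.var 2],
         Tm.fn f [Tm.var 0, Tm.fn f [Tm.var 1, Tm.var 2]]) ∨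
    q = (Tm.fn f [Tm.var 0, Tm.var 1], Tm.fn f [Tm.var 1, Tm.var 0])}

/-- AC equivalence of terms. -/
def simAC {F : Type} (Ac : Set F) : Tm F → Tm F → Prop := simE (ACax Ac)

/-- Peterson–Stickel rewriting: rewriting with AC matching at the redex. -/
def RewPS {F : Type} (Ac : Set F) (R : TRS F) (s t : Tm F) : Prop :=
  ∃ p l r σ w, (l, r) ∈ R ∧ subtermAt s p = some w ∧ simAC Ac w (subst σ l) ∧
    replaceAt s p (subst σ r) = some t

/-- The extended system `R^e`: `R` together with all extensions
`f(f(u,v),x) → f(r,x)` of rules `f(u,v) → r` with `f` an AC symbol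
and `x` a fresh variable. -/
def ACExt {F : Type} (Ac : Set F) (R : TRS F) : TRS F :=
  R ∪ {q | ∃ f ∈ Ac, ∃ u v r x, (Tm.fn f [u, v], r) ∈ R ∧
        x ∉ vars (Tm.fn f [u, v]) ∧ x ∉ vars r ∧
        q = (Tm.fn f [Tm.fn f [u, v], Tm.var x], Tm.fn f [r, Tm.var x])}
section Lemmas
namespace Tm
variable {F : Type}

@[simp] theorem subtermAt_nil (t : Tm F) : subtermAt t [] = some t := by
  cases t <;> simp [subtermAt]

@[simp] theorem subtermAt_var (n : Nat) (i : Nat) (p : List Nat) :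
    subtermAt (Tm.var (F := F) n) (i :: p) = none := by simp [subtermAt]

@[simp] theorem subtermAt_fn (f : F) (ts : List (Tm F)) (i : Nat) (p : List Nat) :
    subtermAt (Tm.fn f ts) (i :: p) = ts[i]?.bind (fun u => subtermAt u p) := by
  cases h : ts[i]? <;> simp [subtermAt, h]

@[simp] theorem replaceAt_nil (t s : Tm F) : replaceAt t [] s = some s := by
  cases t <;> simp [replaceAt]

@[simp] theorem replaceAt_var (n : Nat) (i : Nat) (p : List Nat) (s : Tm F) :
    replaceAt (Tm.var (F := F) n) (i :: p) s = none := by simp [replaceAt]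

@[simp] theorem replaceAt_fn (f : F) (ts : List (Tm F)) (i : Nat) (p : List Nat) (s : Tm F) :
    replaceAt (Tm.fn f ts) (i :: p) s =
      ts[i]?.bind (fun u => (replaceAt u p s).map fun u' => Tm.fn f (ts.set i u')) := by
  cases h : ts[i]? <;> simp [replaceAt, h]

theorem subtermAt_append (p q : List Nat) (s : Tm F) :
    subtermAt s (p ++ q) = (subtermAt s p).bind (fun w => subtermAt w q) := by
  induction p generalizing s with
  | nil => simp
  | cons i p ih =>
    cases s with
    | var n => simp
    | fn f ts =>
      cases h : ts[i]? with
      | none => simp [h]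
      | some ti => simp [h, ih]

theorem replaceAt_append (p q : List Nat) (s c : Tm F) :
    replaceAt s (p ++ q) c =
      (subtermAt s p).bind fun d => (replaceAt d q c).bind fun d' => replaceAt s p d' := by
  induction p generalizing s with
  | nil =>
    cases h : replaceAt s q c <;> simp [h]
  | cons i p ih =>
    cases s with
    | var n => simp
    | fn f ts =>
      cases h : ts[i]? with
      | none => simp [h]
      | some ti =>
        simp only [List.cons_append, replaceAt_fn, subtermAt_fn, h, Option.bind_some, ih]
        cases h1 : subtermAt ti p with
        | none => simp
        | some d =>
          cases h2 : replaceAt d q c with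
          | none => simp
          | some d' => simp

theorem replaceAt_isSome (p : List Nat) (s c : Tm F) :
    (replaceAt s p c).isSome = (subtermAt s p).isSome := by
  induction p generalizing s with
  | nil => simp
  | cons i p ih =>
    cases s with
    | var n => simp
    | fn f ts =>
      cases h : ts[i]? with
      | none => simp [h]
      | some ti => simp [h, ← ih]

theorem replaceAt_exists {p : List Nat} {s d : Tm F} (h : subtermAt s p = some d) (c : Tm F) :
    ∃ e, replaceAt s p c = some e := by
  have := replaceAt_isSome p s c
  rw [h] at this; simp at this
  exact Option.isSome_iff_exists.mp this

theorem subtermAt_replaceAt {p : List Nat} {s a t : Tm F} (h : replaceAt s p a = some t) :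
    subtermAt t p = some a := by
  induction p generalizing s t with
  | nil => simp at h; simp [h.symm]
  | cons i p ih =>
    cases s with
    | var n => simp at h
    | fn f ts =>
      cases hi : ts[i]? with
      | none => simp [hi] at h
      | some ti =>
        simp [hi] at h
        obtain ⟨ti', h1, h2⟩ := h
        have hlt : i < ts.length := by
          by_contra hge
          simp [List.getElem?_eq_none (Nat.le_of_not_lt hge)] at hi
        subst h2
        simp [List.getElem?_set_self', hlt, ih h1]

theorem replaceAt_replaceAt {p : List Nat} {s a t : Tm F} (h : replaceAt s p a = some t)
    (c : Tm F) : replaceAt t p c = replaceAt s p c := by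
  induction p generalizing s t with
  | nil => simp
  | cons i p ih =>
    cases s with
    | var n => simp at h
    | fn f ts =>
      cases hi : ts[i]? with
      | none => simp [hi] at h
      | some ti =>
        simp [hi] at h
        obtain ⟨ti', h1, h2⟩ := h
        have hlt : i < ts.length := by
          by_contra hge
          simp [List.getElem?_eq_none (Nat.le_of_not_lt hge)] at hi
        subst h2
        simp [List.getElem?_set_self', hlt, hi, ih h1, List.set_set, show ts[i] = ti by simpa [hlt] using hi]

end Tm
end Lemmas
section Lemmas2
namespace Tm
variable {F : Type}

theorem node_disjoint {f : F} {ts : List (Tm F)} {i j : Nat} (hij : i ≠ j)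
    {p1 q2 : List Nat} {w A a b u0 t0 : Tm F}
    (hw : subtermAt (Tm.fn f ts) (i :: p1) = some w)
    (hu : replaceAt (Tm.fn f ts) (i :: p1) a = some u0)
    (hA : subtermAt (Tm.fn f ts) (j :: q2) = some A)
    (ht : replaceAt (Tm.fn f ts) (j :: q2) b = some t0) :
    ∃ v0, subtermAt t0 (i :: p1) = some w ∧ replaceAt t0 (i :: p1) a = some v0 ∧
      subtermAt u0 (j :: q2) = some A ∧ replaceAt u0 (j :: q2) b = some v0 := by
  cases hi : ts[i]? with
  | none => simp [hi] at hw
  | some ti =>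
  cases hj : ts[j]? with
  | none => simp [hj] at hA
  | some tj =>
  simp [hi] at hw hu
  simp [hj] at hA ht
  obtain ⟨ti', hti', hu0⟩ := hu
  obtain ⟨tj', htj', ht0⟩ := ht
  subst hu0; subst ht0
  refine ⟨Tm.fn f ((ts.set j tj').set i ti'), ?_, ?_, ?_, ?_⟩
  · simp [List.getElem?_set_ne (Ne.symm hij), hi, hw]
  · simp [List.getElem?_set_ne (Ne.symm hij), hi, hti']
  · simp [List.getElem?_set_ne hij, hj, hA]
  · simp [List.getElem?_set_ne hij, hj, htj', List.set_comm _ _ hij]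

mutual
theorem subst_congr (σ₁ σ₂ : Nat → Tm F) :
    ∀ t : Tm F, (∀ n ∈ varsList t, σ₁ n = σ₂ n) → subst σ₁ t = subst σ₂ t
  | .var n, h => by simpa [subst, varsList] using h n (by simp [varsList])
  | .fn f ts, h => by
    simp only [subst]
    rw [substList_congr σ₁ σ₂ ts (by simpa [varsList] using h)]
theorem substList_congr (σ₁ σ₂ : Nat → Tm F) :
    ∀ ts : List (Tm F), (∀ n ∈ varsListL ts, σ₁ n = σ₂ n) → substList σ₁ ts = substList σ₂ ts
  | [], _ => rfl
  | t :: ts, h => by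
    simp only [substList]
    rw [subst_congr σ₁ σ₂ t (fun n hn => h n (by simp [varsListL, hn])),
      substList_congr σ₁ σ₂ ts (fun n hn => h n (by simp [varsListL, hn]))]
end

theorem le_foldr_max (L : List Nat) : ∀ n ∈ L, n ≤ L.foldr max 0 := by
  induction L with
  | nil => simp
  | cons a L ih =>
    intro n hn
    rcases List.mem_cons.mp hn with h | h
    · subst h; exact Nat.le_max_left _ _
    · exact le_trans (ih n h) (Nat.le_max_right _ _)

theorem fresh_var (a b : List Nat) : ∃ x, x ∉ a ∧ x ∉ b := by
  refine ⟨(a ++ b).foldr max 0 + 1, fun h => ?_, fun h => ?_⟩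
  · have := le_foldr_max (a ++ b) _ (List.mem_append_left _ h); omega
  · have := le_foldr_max (a ++ b) _ (List.mem_append_right _ h); omega

/-- root symbol and arity -/
def root : Tm F → Option (F × Nat)
  | .var _ => none
  | .fn f ts => some (f, ts.length)

theorem length_substList (σ : Nat → Tm F) (ts : List (Tm F)) :
    (substList σ ts).length = ts.length := by
  induction ts with
  | nil => rfl
  | cons t ts ih => simp [substList, ih]

end Tm
end Lemmas2
section Lemmas3
open Tm
variable {F : Type}

theorem subst_fn2 (σ : Nat → Tm F) (f : F) (a b : Tm F) :
    subst σ (Tm.fn f [a, b]) = Tm.fn f [subst σ a, subst σ b] := by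
  simp [subst, substList]

theorem root_rew_ACax {Ac : Set F} {a b : Tm F} (h : Rew (ACax Ac) a b) :
    root a = root b := by
  obtain ⟨p, L, R, τ, hax, hsub, hrep⟩ := h
  obtain ⟨f, _, hLR | hLR⟩ := hax <;>
  · obtain ⟨hL, hR⟩ := Prod.mk.injEq .. ▸ hLR
    cases p with
    | nil =>
      simp at hsub hrep
      subst hsub; subst hrep; subst hL; subst hR
      simp [subst_fn2, root]
    | cons i p =>
      cases a with
      | var n => simp at hsub
      | fn g ts =>
        cases hi : ts[i]? with
        | none => simp [hi] at hsub
        | some ti =>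
          simp [hi] at hrep
          obtain ⟨ti', _, hb⟩ := hrep
          subst hb; simp [root]

theorem root_simE_ACax {Ac : Set F} {a b : Tm F} (h : simE (ACax Ac) a b) :
    root a = root b := by
  induction h with
  | rel _ _ h => exact root_rew_ACax h
  | refl => rfl
  | symm _ _ _ ih => exact ih.symm
  | trans _ _ _ _ _ ih1 ih2 => exact ih1.trans ih2

theorem rew_ctx_fst {B : TRS F} {a a' : Tm F} (f : F) (c : Tm F) (h : Rew B a a') :
    Rew B (Tm.fn f [a, c]) (Tm.fn f [a', c]) := by
  obtain ⟨p, l, r, σ, hr, hs, hrep⟩ := h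
  exact ⟨0 :: p, l, r, σ, hr, by simp [hs], by simp [hrep, List.set]⟩

theorem simE_ctx_fst {B : TRS F} {a a' : Tm F} (f : F) (c : Tm F) (h : simE B a a') :
    simE B (Tm.fn f [a, c]) (Tm.fn f [a', c]) := by
  induction h with
  | rel _ _ h => exact Relation.EqvGen.rel _ _ (rew_ctx_fst f c h)
  | refl => exact Relation.EqvGen.refl _
  | symm _ _ _ ih => exact Relation.EqvGen.symm _ _ ih
  | trans _ _ _ _ _ ih1 ih2 => exact Relation.EqvGen.trans _ _ _ ih1 ih2

theorem list_trichotomy (p q : List Nat) :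
    (∃ r, q = p ++ r) ∨ (∃ r, p = q ++ r ∧ r ≠ []) ∨
      ∃ c i j p' q', i ≠ j ∧ p = c ++ i :: p' ∧ q = c ++ j :: q' := by
  induction p generalizing q with
  | nil => exact Or.inl ⟨q, rfl⟩
  | cons a p ih =>
    cases q with
    | nil => exact Or.inr (Or.inl ⟨a :: p, rfl, by simp⟩)
    | cons b q =>
      by_cases hab : a = b
      · subst hab
        rcases ih q with ⟨r, hr⟩ | ⟨r, hr, hne⟩ | ⟨c, i, j, p', q', hij, hp, hq⟩
        · exact Or.inl ⟨r, by simp [hr]⟩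
        · exact Or.inr (Or.inl ⟨r, by simp [hr], hne⟩)
        · exact Or.inr (Or.inr ⟨a :: c, i, j, p', q', hij, by simp [hp], by simp [hq]⟩)
      · exact Or.inr (Or.inr ⟨[], a, b, p, q, hab, rfl, rfl⟩)

/-- relocation lemma -/
theorem reloc {q p₁ p₂ : List Nat} {s t A B A' B' w c u : Tm F}
    (hsA : subtermAt s q = some A) (hst : replaceAt s q B = some t)
    (hA1 : subtermAt A p₁ = some w) (hA2 : replaceAt A p₁ c = some A')
    (hB1 : subtermAt B p₂ = some w) (hB2 : replaceAt B p₂ c = some B')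
    (hu : replaceAt s (q ++ p₁) c = some u) :
    ∃ v, subtermAt t (q ++ p₂) = some w ∧ replaceAt t (q ++ p₂) c = some v ∧
      subtermAt u q = some A' ∧ replaceAt u q B' = some v := by
  have htq : subtermAt t q = some B := subtermAt_replaceAt hst
  have hu' : replaceAt s q A' = some u := by
    rw [replaceAt_append, hsA] at hu; simpa [hA2] using hu
  obtain ⟨v, hv⟩ := replaceAt_exists hsA B'
  have hv' : replaceAt t q B' = some v := by rw [replaceAt_replaceAt hst]; exact hv
  refine ⟨v, ?_, ?_, subtermAt_replaceAt hu', ?_⟩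
  · rw [subtermAt_append, htq]; simpa using hB1
  · rw [replaceAt_append, htq]; simpa [hB2] using hv'
  · rw [replaceAt_replaceAt hu']; exact hv

end Lemmas3
section Lemmas4
open Tm
variable {F : Type}

theorem shape_of_root {l : Tm F} {σ : Nat → Tm F} {f : F} (hne : ∀ n, l ≠ .var n)
    (h : root (subst σ l) = some (f, 2)) : ∃ l1 l2, l = .fn f [l1, l2] := by
  cases l with
  | var n => exact absurd rfl (hne n)
  | fn g ls =>
    simp only [subst, root, length_substList, Option.some.injEq, Prod.mk.injEq] at h
    obtain ⟨rfl, hlen⟩ := h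
    obtain ⟨a, b, rfl⟩ := List.length_eq_two.mp hlen
    exact ⟨a, b, rfl⟩

theorem main_thm {F : Type} (Ac : Set F) (R : TRS F) (hTRS : IsTRS R) :
    ∀ s t u, Rew (ACax Ac) s t → RewPS Ac (ACExt Ac R) s u →
      ∃ v, RewPS Ac (ACExt Ac R) t v ∧ (u = v ∨ Rew (ACax Ac) u v) := by
  intro s t u hAC hPS
  obtain ⟨q, L, Rr, τ, hax, hsq, hst⟩ := hAC
  obtain ⟨p, l, r, σ, w, hrule, hsp, hsim, hsu⟩ := hPS
  rcases list_trichotomy p q with ⟨q', rfl⟩ | ⟨p', rfl, hp'⟩ | ⟨c0, i, j, p1, q2, hij, rfl, rfl⟩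
  -- Case A : AC step inside (or at) the PS redex
  · have hwq' : subtermAt w q' = some (subst τ L) := by
      rw [subtermAt_append, hsp] at hsq; simpa using hsq
    obtain ⟨w', hw'⟩ := replaceAt_exists hwq' (subst τ Rr)
    have hspw' : replaceAt s p w' = some t := by
      rw [replaceAt_append, hsp] at hst; simpa [hw'] using hst
    have htp : subtermAt t p = some w' := subtermAt_replaceAt hspw'
    have hww' : Rew (ACax Ac) w w' := ⟨q', L, Rr, τ, hax, hwq', hw'⟩
    have hsim' : simAC Ac w' (subst σ l) :=
      Relation.EqvGen.trans _ _ _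
        (Relation.EqvGen.symm _ _ (Relation.EqvGen.rel _ _ hww')) hsim
    refine ⟨u, ⟨p, l, r, σ, w', hrule, htp, hsim', ?_⟩, Or.inl rfl⟩
    rw [replaceAt_replaceAt hspw']; exact hsu
  -- Case C : AC step strictly above the PS redex
  · obtain ⟨f, hf, hLR | hLR⟩ := hax
    -- associativity axiom
    · rw [Prod.ext_iff] at hLR; obtain ⟨rfl, rfl⟩ := hLR
      have hsq' : subtermAt s q = some (Tm.fn f [Tm.fn f [τ 0, τ 1], τ 2]) := by
        simpa [subst, substList] using hsq
      have hst' : replaceAt s q (Tm.fn f [τ 0, Tm.fn f [τ 1, τ 2]]) = some t := by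
        simpa [subst, substList] using hst
      have hwp' : subtermAt (Tm.fn f [Tm.fn f [τ 0, τ 1], τ 2]) p' = some w := by
        rw [subtermAt_append, hsq'] at hsp; simpa using hsp
      have haxmem : (Tm.fn f [Tm.fn f [Tm.var 0, Tm.var 1], Tm.var 2],
          Tm.fn f [Tm.var 0, Tm.fn f [Tm.var 1, Tm.var 2]]) ∈ ACax Ac := ⟨f, hf, Or.inl rfl⟩
      match p', hp' with
      | 1 :: rest, _ =>
        -- inside τ 2
        have hw2 : subtermAt (τ 2) rest = some w := by simpa using hwp'
        obtain ⟨a', ha'⟩ := replaceAt_exists hw2 (subst σ r)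
        obtain ⟨v, hv1, hv2, hv3, hv4⟩ := reloc (p₂ := 1 :: 1 :: rest)
          (A' := Tm.fn f [Tm.fn f [τ 0, τ 1], a'])
          (B' := Tm.fn f [τ 0, Tm.fn f [τ 1, a']]) hsq' hst'
          hwp' (by simp [ha']) (by simpa using hwp') (by simp [ha']) hsu
        refine ⟨v, ⟨q ++ 1 :: 1 :: rest, l, r, σ, w, hrule, hv1, hsim, hv2⟩,
          Or.inr ⟨q, _, _, fun n => if n = 2 then a' else τ n, haxmem, ?_, ?_⟩⟩
        · simpa [subst, substList] using hv3
        · simpa [subst, substList] using hv4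
      | 0 :: 0 :: rest, _ =>
        have hw2 : subtermAt (τ 0) rest = some w := by simpa using hwp'
        obtain ⟨a', ha'⟩ := replaceAt_exists hw2 (subst σ r)
        obtain ⟨v, hv1, hv2, hv3, hv4⟩ := reloc (p₂ := 0 :: rest)
          (A' := Tm.fn f [Tm.fn f [a', τ 1], τ 2])
          (B' := Tm.fn f [a', Tm.fn f [τ 1, τ 2]]) hsq' hst'
          hwp' (by simp [ha']) (by simpa using hwp') (by simp [ha']) hsu
        refine ⟨v, ⟨q ++ 0 :: rest, l, r, σ, w, hrule, hv1, hsim, hv2⟩,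
          Or.inr ⟨q, _, _, fun n => if n = 0 then a' else τ n, haxmem, ?_, ?_⟩⟩
        · simpa [subst, substList] using hv3
        · simpa [subst, substList] using hv4
      | 0 :: 1 :: rest, _ =>
        have hw2 : subtermAt (τ 1) rest = some w := by simpa using hwp'
        obtain ⟨a', ha'⟩ := replaceAt_exists hw2 (subst σ r)
        obtain ⟨v, hv1, hv2, hv3, hv4⟩ := reloc (p₂ := 1 :: 0 :: rest)
          (A' := Tm.fn f [Tm.fn f [τ 0, a'], τ 2])
          (B' := Tm.fn f [τ 0, Tm.fn f [a', τ 2]]) hsq' hst'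
          hwp' (by simp [ha']) (by simpa using hwp') (by simp [ha']) hsu
        refine ⟨v, ⟨q ++ 1 :: 0 :: rest, l, r, σ, w, hrule, hv1, hsim, hv2⟩,
          Or.inr ⟨q, _, _, fun n => if n = 1 then a' else τ n, haxmem, ?_, ?_⟩⟩
        · simpa [subst, substList] using hv3
        · simpa [subst, substList] using hv4
      | (n+2) :: rest, _ => simp at hwp'
      | 0 :: (n+2) :: rest, _ => simp at hwp'
      | [0], _ =>
        -- the extension case : the PS redex is the inner f-application
        obtain rfl : Tm.fn f [τ 0, τ 1] = w := by simpa using hwp'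
        have hroot : root (subst σ l) = some (f, 2) := by
          have := root_simE_ACax hsim
          simpa [root] using this.symm
        have hu' : replaceAt s q (Tm.fn f [subst σ r, τ 2]) = some u := by
          rw [replaceAt_append, hsq'] at hsu; simpa using hsu
        have htq : subtermAt t q = some (Tm.fn f [τ 0, Tm.fn f [τ 1, τ 2]]) :=
          subtermAt_replaceAt hst'
        have step1 : Rew (ACax Ac) (Tm.fn f [Tm.fn f [τ 0, τ 1], τ 2])
            (Tm.fn f [τ 0, Tm.fn f [τ 1, τ 2]]) :=
          ⟨[], _, _, τ, haxmem, by simp [subst, substList], by simp [subst, substList]⟩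
        rcases hrule with hR | hE
        · -- rule of R : use its extension, u = v
          obtain ⟨l1, l2, rfl⟩ := shape_of_root (hTRS _ hR).1 hroot
          obtain ⟨x, hx1, hx2⟩ := fresh_var (varsList (Tm.fn f [l1, l2])) (varsList r)
          have hext : (Tm.fn f [Tm.fn f [l1, l2], Tm.var x], Tm.fn f [r, Tm.var x])
              ∈ ACExt Ac R := Or.inr ⟨f, hf, l1, l2, r, x, hR, hx1, hx2, rfl⟩
          set σ' : Nat → Tm F := fun n => if n = x then τ 2 else σ n with hσ'
          have hσ'l : subst σ' (Tm.fn f [l1, l2]) = subst σ (Tm.fn f [l1, l2]) :=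
            subst_congr _ _ _ (fun n hn => if_neg (by rintro rfl; exact hx1 hn))
          have hσ'r : subst σ' r = subst σ r :=
            subst_congr _ _ _ (fun n hn => if_neg (by rintro rfl; exact hx2 hn))
          refine ⟨u, ⟨q, _, _, σ', _, hext, htq, ?_, ?_⟩, Or.inl rfl⟩
          · have e1 : subst σ' (Tm.fn f [Tm.fn f [l1, l2], Tm.var x]) =
                Tm.fn f [subst σ' (Tm.fn f [l1, l2]), σ' x] := by
              simp [subst, substList]
            rw [e1, hσ'l, show σ' x = τ 2 by simp [hσ']]
            exact Relation.EqvGen.trans _ _ _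
              (Relation.EqvGen.symm _ _ (Relation.EqvGen.rel _ _ step1))
              (simE_ctx_fst f (τ 2) hsim)
          · have e1 : subst σ' (Tm.fn f [r, Tm.var x]) =
                Tm.fn f [subst σ' r, σ' x] := by simp [subst, substList]
            rw [e1, hσ'r, show σ' x = τ 2 by simp [hσ'], replaceAt_replaceAt hst']
            exact hu'
        · -- extension rule : reuse it with a modified substitution
          obtain ⟨g, hg, u₁, v₁, r₀, x₀, hR0, hx1, hx2, heq⟩ := hE
          rw [Prod.ext_iff] at heq; obtain ⟨rfl, rfl⟩ := heq
          have hgf : g = f := by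
            simp [root, subst, substList] at hroot
            exact hroot
          subst hgf
          set M := subst σ (Tm.fn g [u₁, v₁]) with hM
          set σ' : Nat → Tm F := fun n => if n = x₀ then Tm.fn g [σ x₀, τ 2] else σ n with hσ'
          have hσ'M : subst σ' (Tm.fn g [u₁, v₁]) = M :=
            subst_congr _ _ _ (fun n hn => if_neg (by rintro rfl; exact hx1 hn))
          have hσ'r : subst σ' r₀ = subst σ r₀ :=
            subst_congr _ _ _ (fun n hn => if_neg (by rintro rfl; exact hx2 hn))
          have hu' : replaceAt s q
              (Tm.fn g [Tm.fn g [subst σ r₀, σ x₀], τ 2]) = some u := by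
            rw [replaceAt_append, hsq'] at hsu; simpa [subst, substList] using hsu
          obtain ⟨v, hv⟩ := replaceAt_exists hsq'
            (Tm.fn g [subst σ r₀, Tm.fn g [σ x₀, τ 2]])
          have hvt : replaceAt t q (Tm.fn g [subst σ r₀, Tm.fn g [σ x₀, τ 2]]) = some v := by
            rw [replaceAt_replaceAt hst']; exact hv
          have step3 : Rew (ACax Ac) (Tm.fn g [Tm.fn g [M, σ x₀], τ 2])
              (Tm.fn g [M, Tm.fn g [σ x₀, τ 2]]) :=
            ⟨[], _, _, fun n => if n = 0 then M else if n = 1 then σ x₀ else τ 2, haxmem,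
              by simp [subst, substList], by simp [subst, substList]⟩
          refine ⟨v, ⟨q, _, _, σ', _, Or.inr ⟨g, hg, u₁, v₁, r₀, x₀, hR0, hx1, hx2, rfl⟩,
            htq, ?_, ?_⟩, Or.inr ⟨q, _, _,
              fun n => if n = 0 then subst σ r₀ else if n = 1 then σ x₀ else τ 2,
              haxmem, ?_, ?_⟩⟩
          · have e1 : subst σ' (Tm.fn g [Tm.fn g [u₁, v₁], Tm.var x₀]) =
                Tm.fn g [subst σ' (Tm.fn g [u₁, v₁]), σ' x₀] := by
              simp [subst, substList]
            rw [e1, hσ'M, show σ' x₀ = Tm.fn g [σ x₀, τ 2] by simp [hσ']]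
            refine Relation.EqvGen.trans _ _ _ (Relation.EqvGen.trans _ _ _
              (Relation.EqvGen.symm _ _ (Relation.EqvGen.rel _ _ step1))
              (simE_ctx_fst g (τ 2) ?_)) (Relation.EqvGen.rel _ _ step3)
            simpa [subst, substList, hM, simAC] using hsim
          · have e1 : subst σ' (Tm.fn g [r₀, Tm.var x₀]) =
                Tm.fn g [subst σ' r₀, σ' x₀] := by simp [subst, substList]
            rw [e1, hσ'r, show σ' x₀ = Tm.fn g [σ x₀, τ 2] by simp [hσ']]; exact hvt
          · rw [subtermAt_replaceAt hu']
            simp [subst, substList]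
          · have : subst (fun n => if n = 0 then subst σ r₀ else if n = 1 then σ x₀ else τ 2)
                (Tm.fn g [Tm.var 0, Tm.fn g [Tm.var 1, Tm.var 2]]) =
                Tm.fn g [subst σ r₀, Tm.fn g [σ x₀, τ 2]] := by
              simp [subst, substList]
            rw [this, replaceAt_replaceAt hu']
            exact hv
    -- commutativity axiom
    · rw [Prod.ext_iff] at hLR; obtain ⟨rfl, rfl⟩ := hLR
      have hsq' : subtermAt s q = some (Tm.fn f [τ 0, τ 1]) := by
        simpa [subst, substList] using hsq
      have hst' : replaceAt s q (Tm.fn f [τ 1, τ 0]) = some t := by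
        simpa [subst, substList] using hst
      have hwp' : subtermAt (Tm.fn f [τ 0, τ 1]) p' = some w := by
        rw [subtermAt_append, hsq'] at hsp; simpa using hsp
      have haxmem : (Tm.fn f [Tm.var 0, Tm.var 1], Tm.fn f [Tm.var 1, Tm.var 0])
          ∈ ACax Ac := ⟨f, hf, Or.inr rfl⟩
      match p', hp' with
      | 0 :: rest, _ =>
        have hw2 : subtermAt (τ 0) rest = some w := by simpa using hwp'
        obtain ⟨a', ha'⟩ := replaceAt_exists hw2 (subst σ r)
        obtain ⟨v, hv1, hv2, hv3, hv4⟩ := reloc (p₂ := 1 :: rest)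
          (A' := Tm.fn f [a', τ 1]) (B' := Tm.fn f [τ 1, a']) hsq' hst'
          hwp' (by simp [ha']) (by simpa using hwp') (by simp [ha']) hsu
        refine ⟨v, ⟨q ++ 1 :: rest, l, r, σ, w, hrule, hv1, hsim, hv2⟩,
          Or.inr ⟨q, _, _, fun n => if n = 0 then a' else τ n, haxmem, ?_, ?_⟩⟩
        · simpa [subst, substList] using hv3
        · simpa [subst, substList] using hv4
      | 1 :: rest, _ =>
        have hw2 : subtermAt (τ 1) rest = some w := by simpa using hwp'
        obtain ⟨a', ha'⟩ := replaceAt_exists hw2 (subst σ r)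
        obtain ⟨v, hv1, hv2, hv3, hv4⟩ := reloc (p₂ := 0 :: rest)
          (A' := Tm.fn f [τ 0, a']) (B' := Tm.fn f [a', τ 0]) hsq' hst'
          hwp' (by simp [ha']) (by simpa using hwp') (by simp [ha']) hsu
        refine ⟨v, ⟨q ++ 0 :: rest, l, r, σ, w, hrule, hv1, hsim, hv2⟩,
          Or.inr ⟨q, _, _, fun n => if n = 1 then a' else τ n, haxmem, ?_, ?_⟩⟩
        · simpa [subst, substList] using hv3
        · simpa [subst, substList] using hv4
      | (n+2) :: rest, _ => simp at hwp'
  -- Case B : disjoint positions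
  · rw [subtermAt_append] at hsp hsq
    rw [replaceAt_append] at hst hsu
    cases hs0 : subtermAt s c0 with
    | none => rw [hs0] at hsp; simp at hsp
    | some s0 =>
    rw [hs0] at hsp hsq hst hsu
    simp only [Option.bind_some] at hsp hsq hst hsu
    cases ht0 : replaceAt s0 (j :: q2) (subst τ Rr) with
    | none => rw [ht0] at hst; simp at hst
    | some t0 =>
    rw [ht0] at hst; simp only [Option.bind_some] at hst
    cases hu0 : replaceAt s0 (i :: p1) (subst σ r) with
    | none => rw [hu0] at hsu; simp at hsu
    | some u0 =>
    rw [hu0] at hsu; simp only [Option.bind_some] at hsu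
    cases s0 with
    | var n => simp at hsp
    | fn g ts =>
    obtain ⟨v0, h1, h2, h3, h4⟩ := node_disjoint hij hsp hu0 hsq ht0
    have htc0 : subtermAt t c0 = some t0 := subtermAt_replaceAt hst
    obtain ⟨v, hv⟩ := replaceAt_exists hs0 v0
    have hvt : replaceAt t c0 v0 = some v := by rw [replaceAt_replaceAt hst]; exact hv
    have huc0 : subtermAt u c0 = some u0 := subtermAt_replaceAt hsu
    have hvu : replaceAt u c0 v0 = some v := by rw [replaceAt_replaceAt hsu]; exact hv
    refine ⟨v, ⟨c0 ++ i :: p1, l, r, σ, w, hrule, ?_, hsim, ?_⟩, Or.inr ⟨c0 ++ j :: q2, L, Rr, τ, hax, ?_, ?_⟩⟩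
    · rw [subtermAt_append, htc0]; simpa using h1
    · rw [replaceAt_append, htc0]; simp [h2]; exact hvt
    · rw [subtermAt_append, huc0]; simpa using h3
    · rw [replaceAt_append, huc0]; simp [h4]; exact hvu

end Lemmas4

/-- Local coherence: `←AC · →R^e,AC ⊆ →R^e,AC · (←AC)^=`. -/
theorem stmt14 {F : Type} (Ac : Set F) (R : TRS F) (hTRS : IsTRS R) :
    ∀ s t u, Rew (ACax Ac) s t → RewPS Ac (ACExt Ac R) s u →
      ∃ v, RewPS Ac (ACExt Ac R) t v ∧ (u = v ∨ Rew (ACax Ac) u v) := by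
  exact main_thm Ac R hTRS
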